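/- Let A be a finite set of non-negative integers with 0 ∈ A, gcd(A) = 1, and b := max A (so b ≥ 1). Set T := ⋃_{h≥0} hA and T' := ⋃_{h≥0} h(b−A), where b−A := {b − x : x ∈ A}. For each r ∈ {0, …, b−1} let m_r be the least element of T congruent to r mod b, and m'_r the least element of T' congruent to r mod b (these exist since gcd(A) = 1). Then for every natural number h with h ≥ 2b − 4 (as integers), the identity (1 − x^b) · ∑_{n ∈ hA} x^n = ∑_{r=0}^{b−1} x^{m_r} − ∑_{r=0}^{b−1} x^{b(h+1) − m'_r} holds in the ring of Laurent polynomials ℤ[x, x^{−1}]. -/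

import Mathlib

/-
Sort `hA` by residues modulo `b`. Every least element `m r` of a residue class of the cone is a
sum of fewer than `b` nonzero parts, because its partial sums are least in pairwise distinct
classes. For `h ≥ 2b - 4` this makes the class of `r` in `hA` the whole progression
`m r, m r + b, …` up to `bh - m' (-r)` (with `-r` read modulo `b`): an `n` in that range is
either `m r + bk` or, through the reflection `x ↦ bh - x` that exchanges `hA` and `h(b - A)`,
`bh - n = m' (-r) + bl`, and one of these two representations uses at most `h` parts.
Multiplying each progression by `1 - x^b` telescopes it to `x^(m r) - x^(b(h + 1) - m' (-r))`.
-/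

open Pointwise

/-- The `h`-fold sumset `hA` of a finite set of naturals:
`0A = {0}` and `(n+1)A = A + nA`. -/
def iterFin (A : Finset ℕ) : ℕ → Finset ℕ
  | 0 => {0}
  | n + 1 => A + iterFin A n

/-- The tangent cone at `0`: the union of all the iterated sumsets of `A`. -/
def tangentSet (A : Finset ℕ) : Set ℕ := ⋃ h : ℕ, (iterFin A h : Set ℕ)

lemma iterFin_eq_nsmul (A : Finset ℕ) (h : ℕ) : iterFin A h = h • A := by
  induction h with
  | zero => rfl
  | succ h ih => rw [iterFin, ih, succ_nsmul']

lemma mem_tangentSet {A : Finset ℕ} {n : ℕ} : n ∈ tangentSet A ↔ ∃ h : ℕ, n ∈ h • A := by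
  simp only [tangentSet, Set.mem_iUnion, Finset.mem_coe, iterFin_eq_nsmul]

lemma add_mem_tangentSet {A : Finset ℕ} {a y : ℕ} (ha : a ∈ A) (hy : y ∈ tangentSet A) :
    a + y ∈ tangentSet A := by
  obtain ⟨h, hy⟩ := mem_tangentSet.1 hy
  exact mem_tangentSet.2 ⟨h + 1, succ_nsmul' A h ▸ Finset.add_mem_add ha hy⟩

lemma add_mul_mem_nsmul {A : Finset ℕ} {b x j : ℕ} (hbA : b ∈ A) (hx : x ∈ j • A) (k : ℕ) :
    x + b * k ∈ (j + k) • A := by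
  rw [add_nsmul, mul_comm, ← smul_eq_mul]
  exact Finset.add_mem_add hx (Finset.nsmul_mem_nsmul hbA)

lemma le_mul_of_mem_nsmul {A : Finset ℕ} {b : ℕ} (hA : ∀ a ∈ A, a ≤ b) :
    ∀ {h n : ℕ}, n ∈ h • A → n ≤ b * h
  | 0, n, hn => by simp_all
  | h + 1, _, hn => by
    rw [succ_nsmul'] at hn
    obtain ⟨a, ha, x, hx, rfl⟩ := Finset.mem_add.1 hn
    have := le_mul_of_mem_nsmul hA hx
    have := hA a ha
    rw [mul_add_one]
    omega

lemma image_sub_le {A : Finset ℕ} {b : ℕ} : ∀ a ∈ A.image (b - ·), a ≤ b := by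
  simp

lemma image_sub_image_sub {A : Finset ℕ} {b : ℕ} (hA : ∀ a ∈ A, a ≤ b) :
    (A.image (b - ·)).image (b - ·) = A := by
  rw [Finset.image_image]
  conv_rhs => rw [← Finset.image_id (s := A)]
  exact Finset.image_congr fun a ha => Nat.sub_sub_self (hA a ha)

lemma sub_mem_nsmul_image_sub {A : Finset ℕ} {b : ℕ} (hA : ∀ a ∈ A, a ≤ b) :
    ∀ {h n : ℕ}, n ∈ h • A → b * h - n ∈ h • A.image (b - ·)
  | 0, n, hn => by simp_all
  | h + 1, _, hn => by
    rw [succ_nsmul'] at hn ⊢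
    obtain ⟨a, ha, x, hx, rfl⟩ := Finset.mem_add.1 hn
    have hxh := le_mul_of_mem_nsmul hA hx
    have hab := hA a ha
    have hsplit : b * (h + 1) - (a + x) = (b - a) + (b * h - x) := by rw [mul_add_one]; omega
    rw [hsplit]
    exact Finset.add_mem_add (Finset.mem_image_of_mem _ ha) (sub_mem_nsmul_image_sub hA hx)

lemma mem_nsmul_of_sub_mem_nsmul_image_sub {A : Finset ℕ} {b h n : ℕ} (hA : ∀ a ∈ A, a ≤ b)
    (hn : n ≤ b * h) (hsub : b * h - n ∈ h • A.image (b - ·)) : n ∈ h • A := by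
  have := sub_mem_nsmul_image_sub image_sub_le hsub
  rwa [image_sub_image_sub hA, Nat.sub_sub_self hn] at this

lemma mod_eq_sub_mod_of_dvd_add {b x y : ℕ} (hb : 0 < b) (hxy : b ∣ x + y) :
    y % b = (b - x % b) % b := by
  refine Nat.ModEq.add_right_cancel' (x % b) ?_
  rw [Nat.sub_add_cancel (Nat.mod_lt x hb).le]
  calc y + x % b ≡ y + x [MOD b] := (Nat.mod_modEq x b).add_left y
    _ ≡ 0 [MOD b] := by rw [add_comm]; exact Nat.modEq_zero_iff_dvd.2 hxy
    _ ≡ b [MOD b] := (Nat.modEq_zero_iff_dvd.2 dvd_rfl).symm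

lemma dvd_add_sub_mod {b r : ℕ} (hr : r ≤ b) : b ∣ r + (b - r) % b := by
  refine Nat.modEq_zero_iff_dvd.1 ?_
  calc r + (b - r) % b ≡ r + (b - r) [MOD b] := (Nat.mod_modEq _ b).add_left r
    _ = b := Nat.add_sub_cancel' hr
    _ ≡ 0 [MOD b] := Nat.modEq_zero_iff_dvd.2 dvd_rfl

lemma mul_sub_mod {b h n : ℕ} (hb : 0 < b) (hn : n ≤ b * h) :
    (b * h - n) % b = (b - n % b) % b :=
  mod_eq_sub_mod_of_dvd_add hb (by rw [Nat.add_sub_cancel' hn]; exact dvd_mul_right b h)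

lemma sub_sub_mod_mod {b r : ℕ} (hr : r < b) : (b - (b - r) % b) % b = r := by
  have := mod_eq_sub_mod_of_dvd_add (b := b) (x := (b - r) % b) (y := r) (by omega)
    (by rw [add_comm]; exact dvd_add_sub_mod hr.le)
  rwa [Nat.mod_mod, Nat.mod_eq_of_lt hr, eq_comm] at this

lemma Finset.sum_range_sub_mod {M : Type*} [AddCommMonoid M] (b : ℕ) (f : ℕ → M) :
    ∑ r ∈ Finset.range b, f ((b - r) % b) = ∑ r ∈ Finset.range b, f r := by
  refine Finset.sum_nbij' (fun r => (b - r) % b) (fun r => (b - r) % b) ?_ ?_ ?_ ?_ fun _ _ => rfl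
  all_goals intro r hr; simp only [Finset.mem_range] at hr ⊢
  · exact Nat.mod_lt _ (by omega)
  · exact Nat.mod_lt _ (by omega)
  · exact sub_sub_mod_mod hr
  · exact sub_sub_mod_mod hr

lemma LaurentPolynomial.one_sub_T_mul_sum_T_add_mul {R : Type*} [CommRing R] (u d : ℤ) (K : ℕ) :
    (1 - T d : LaurentPolynomial R) * ∑ k ∈ Finset.range K, T (u + d * k) =
      T u - T (u + d * K) := by
  have hpow (k : ℕ) : (T (u + d * k) : LaurentPolynomial R) = T u * T d ^ k := by
    rw [T_pow, ← T_add, mul_comm d]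
  simp only [hpow, ← Finset.mul_sum]
  linear_combination -(T u : LaurentPolynomial R) * geom_sum_mul (T d : LaurentPolynomial R) K

def IsLeastMod (S : Set ℕ) (b n : ℕ) : Prop :=
  n ∈ S ∧ ∀ y ∈ S, y % b = n % b → n ≤ y

def IsApery (S : Set ℕ) (b : ℕ) (m : ℕ → ℕ) : Prop :=
  ∀ r < b, m r ∈ S ∧ m r % b = r ∧ ∀ n ∈ S, n % b = r → m r ≤ n

lemma IsApery.isLeastMod {S : Set ℕ} {b r : ℕ} {m : ℕ → ℕ} (hm : IsApery S b m) (hr : r < b) :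
    IsLeastMod S b (m r) :=
  ⟨(hm r hr).1, fun y hy hyr => (hm r hr).2.2 y hy (hyr.trans (hm r hr).2.1)⟩

lemma IsLeastMod.eq_of_mod_eq {S : Set ℕ} {b x y : ℕ} (hx : IsLeastMod S b x)
    (hy : IsLeastMod S b y) (hxy : x % b = y % b) : x = y :=
  le_antisymm (hx.2 y hy.1 hxy.symm) (hy.2 x hx.1 hxy)

lemma card_lt_of_isLeastMod {S : Set ℕ} {b n : ℕ} {F : Finset ℕ} (hb : 0 < b)
    (hn : IsLeastMod S b n) (hF : ∀ y ∈ F, y < n ∧ IsLeastMod S b y) : F.card < b := by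
  have hnF : n ∉ F := fun h => (hF n h).1.false
  have hleast : ∀ y ∈ insert n F, IsLeastMod S b y :=
    Finset.forall_mem_insert _ _ _ |>.2 ⟨hn, fun y hy => (hF y hy).2⟩
  calc F.card < (insert n F).card := Finset.card_lt_card (Finset.ssubset_insert hnF)
    _ ≤ (Finset.range b).card :=
      Finset.card_le_card_of_injOn (· % b) (fun y _ => Finset.mem_range.2 (Nat.mod_lt y hb))
        fun x hx y hy => (hleast x hx).eq_of_mod_eq (hleast y hy)
    _ = b := Finset.card_range b

/-- `n` is a sum of `k` parts `0 < a < b` whose proper partial sums, collected in `F`, are again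
least in their residue classes. -/
lemma exists_chain_of_isLeastMod {A : Finset ℕ} {b : ℕ} (hA : ∀ a ∈ A, a ≤ b) :
    ∀ {j n : ℕ}, n ∈ j • A → IsLeastMod (tangentSet A) b n →
      ∃ k, ∃ F : Finset ℕ, n ∈ k • A ∧ k ≤ n ∧ n ≤ k * (b - 1) ∧ F.card = k ∧
        ∀ y ∈ F, y < n ∧ IsLeastMod (tangentSet A) b y
  | 0, n, hn, _ => ⟨0, ∅, hn, by simp_all⟩
  | j + 1, _, hn, hmin => by
    rw [succ_nsmul'] at hn
    obtain ⟨a, ha, x, hx, rfl⟩ := Finset.mem_add.1 hn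
    obtain rfl | ha0 := Nat.eq_zero_or_pos a
    · rw [zero_add] at hmin ⊢
      exact exists_chain_of_isLeastMod hA hx hmin
    have hxT : x ∈ tangentSet A := mem_tangentSet.2 ⟨j, hx⟩
    have hab : a ≠ b := by
      rintro rfl
      have := hmin.2 x hxT (by rw [Nat.add_mod_left])
      omega
    have hxmin : IsLeastMod (tangentSet A) b x := ⟨hxT, fun y hy hyx => by
      have := hmin.2 (a + y) (add_mem_tangentSet ha hy) (by rw [Nat.add_mod, hyx, ← Nat.add_mod])
      omega⟩
    obtain ⟨k, F, hxk, hkx, hxb, rfl, hF⟩ := exists_chain_of_isLeastMod hA hx hxmin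
    have hab' := hA a ha
    refine ⟨F.card + 1, insert x F, ?_, by omega, ?_, ?_, ?_⟩
    · rw [succ_nsmul']
      exact Finset.add_mem_add ha hxk
    · rw [add_one_mul]
      omega
    · exact Finset.card_insert_of_notMem fun h => (hF x h).1.false
    · refine Finset.forall_mem_insert _ _ _ |>.2 ⟨⟨by omega, hxmin⟩, fun y hy => ?_⟩
      exact ⟨(hF y hy).1.trans (by omega), (hF y hy).2⟩

lemma exists_nsmul_of_isLeastMod {A : Finset ℕ} {b n : ℕ} (hA : ∀ a ∈ A, a ≤ b) (hb : 0 < b)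
    (hn : IsLeastMod (tangentSet A) b n) :
    ∃ k < b, n ∈ k • A ∧ k ≤ n ∧ n ≤ (b - 1) * (b - 1) := by
  obtain ⟨j, hj⟩ := mem_tangentSet.1 hn.1
  obtain ⟨k, F, hk, hkn, hnk, rfl, hF⟩ := exists_chain_of_isLeastMod hA hj hn
  have hkb := card_lt_of_isLeastMod hb hn hF
  exact ⟨F.card, hkb, hk, hkn, hnk.trans (Nat.mul_le_mul_right _ (by omega))⟩

lemma mod_eq_and_le_and_add_le_iff {b r u v h K n : ℕ} (hb : 0 < b) (hu : u % b = r)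
    (huv : u + b * K + v = b * (h + 1)) :
    (n % b = r ∧ u ≤ n ∧ n + v ≤ b * h) ↔ ∃ k < K, u + b * k = n := by
  constructor
  · rintro ⟨hnr, hun, hnv⟩
    obtain ⟨k, hk⟩ := (Nat.modEq_iff_dvd' hun).1 (hu.trans hnr.symm)
    refine ⟨k, Nat.lt_of_mul_lt_mul_left (a := b) ?_, by omega⟩
    rw [mul_add_one] at huv
    omega
  · rintro ⟨k, hk, rfl⟩
    have hkK : b * (k + 1) ≤ b * K := Nat.mul_le_mul_left b hk
    rw [mul_add_one] at hkK huv
    exact ⟨by rw [Nat.add_mul_mod_self_left, hu], by omega, by omega⟩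

lemma mem_nsmul_iff_of_isApery {A : Finset ℕ} {b h n r : ℕ} {m m' : ℕ → ℕ} (h0 : 0 ∈ A)
    (hb : IsGreatest (A : Set ℕ) b) (hm : IsApery (tangentSet A) b m)
    (hm' : IsApery (tangentSet (A.image (b - ·))) b m') (hh : 2 * b ≤ h + 4) (hr : r < b)
    (hnr : n % b = r) :
    n ∈ h • A ↔ m r ≤ n ∧ n + m' ((b - r) % b) ≤ b * h := by
  have hA : ∀ a ∈ A, a ≤ b := hb.2
  set s := (b - r) % b
  have hb0 : 0 < b := by omega
  have hs : s < b := Nat.mod_lt _ hb0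
  constructor
  · intro hn
    have hnb := le_mul_of_mem_nsmul hA hn
    have hsub := sub_mem_nsmul_image_sub hA hn
    have := (hm' s hs).2.2 _ (mem_tangentSet.2 ⟨h, hsub⟩) (by rw [mul_sub_mod hb0 hnb, hnr])
    exact ⟨(hm r hr).2.2 n (mem_tangentSet.2 ⟨h, hn⟩) hnr, by omega⟩
  · rintro ⟨hmn, hnm'⟩
    obtain ⟨j, hjb, hj, hjm, -⟩ := exists_nsmul_of_isLeastMod hA hb0 (hm.isLeastMod hr)
    obtain ⟨j', hjb', hj', hjm', -⟩ :=
      exists_nsmul_of_isLeastMod image_sub_le hb0 (hm'.isLeastMod hs)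
    obtain ⟨k, hk⟩ := (Nat.modEq_iff_dvd' hmn).1 ((hm r hr).2.1.trans hnr.symm)
    obtain ⟨l, hl⟩ := (Nat.modEq_iff_dvd' (show m' s ≤ b * h - n by omega)).1 (by
      rw [Nat.ModEq, (hm' s hs).2.1, mul_sub_mod hb0 (by omega), hnr])
    obtain ⟨c, hc⟩ : b ∣ m r + m' s := by
      rw [Nat.dvd_iff_mod_eq_zero, Nat.add_mod, (hm r hr).2.1, (hm' s hs).2.1]
      exact Nat.mod_eq_zero_of_dvd (dvd_add_sub_mod hr.le)
    have hhckl : h = c + k + l := Nat.eq_of_mul_eq_mul_left hb0 (by rw [mul_add, mul_add]; omega)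
    -- Otherwise `j + j' ≥ 2h + 2 - (k + l) = h + 2 + c`, against `j, j' < b` and `2b ≤ h + 4`
    -- (and `j = j' = 0` when `c = 0`).
    have hshort : j + k ≤ h ∨ j' + l ≤ h := by
      obtain rfl | hc0 := Nat.eq_zero_or_pos c
      · left
        simp only [mul_zero, Nat.add_eq_zero_iff] at hc
        omega
      · omega
    rcases hshort with hshort | hshort
    · refine Finset.nsmul_subset_nsmul_right h0 hshort ?_
      rw [show n = m r + b * k by omega]
      exact add_mul_mem_nsmul hb.1 hj k
    · refine mem_nsmul_of_sub_mem_nsmul_image_sub hA (by omega) ?_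
      have h0' : 0 ∈ A.image (b - ·) := Finset.mem_image.2 ⟨b, hb.1, Nat.sub_self b⟩
      refine Finset.nsmul_subset_nsmul_right h0' hshort ?_
      rw [show b * h - n = m' s + b * l by omega]
      exact add_mul_mem_nsmul (Finset.mem_image.2 ⟨0, h0, Nat.sub_zero b⟩) hj' l

lemma filter_mod_nsmul_eq_image {A : Finset ℕ} {b h r : ℕ} {m m' : ℕ → ℕ} (h0 : 0 ∈ A)
    (hb : IsGreatest (A : Set ℕ) b) (hm : IsApery (tangentSet A) b m)
    (hm' : IsApery (tangentSet (A.image (b - ·))) b m') (hh : 2 * b ≤ h + 4) (hr : r < b) :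
    ∃ K, (h • A).filter (· % b = r) = (Finset.range K).image (m r + b * ·) ∧
      m r + b * K + m' ((b - r) % b) = b * (h + 1) := by
  set s := (b - r) % b
  have hb0 : 0 < b := by omega
  have hs : s < b := Nat.mod_lt _ hb0
  obtain ⟨-, -, -, -, hmr⟩ := exists_nsmul_of_isLeastMod hb.2 hb0 (hm.isLeastMod hr)
  obtain ⟨-, -, -, -, hms⟩ := exists_nsmul_of_isLeastMod image_sub_le hb0 (hm'.isLeastMod hs)
  obtain ⟨c, hc⟩ : b ∣ m r + m' s := by
    rw [Nat.dvd_iff_mod_eq_zero, Nat.add_mod, (hm r hr).2.1, (hm' s hs).2.1]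
    exact Nat.mod_eq_zero_of_dvd (dvd_add_sub_mod hr.le)
  have hch : c ≤ h + 1 := by
    refine Nat.le_of_mul_le_mul_left ?_ hb0
    obtain ⟨d, rfl⟩ := Nat.exists_eq_add_of_le' hb0
    simp only [Nat.add_sub_cancel] at hmr hms
    nlinarith [Nat.mul_le_mul_left d hh]
  have hK : m r + b * (h + 1 - c) + m' s = b * (h + 1) := by
    rw [Nat.mul_sub, ← hc]
    have := Nat.mul_le_mul_left b hch
    omega
  refine ⟨h + 1 - c, Finset.ext fun n => ?_, hK⟩
  simp only [Finset.mem_filter, Finset.mem_image, Finset.mem_range]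
  rw [← mod_eq_and_le_and_add_le_iff hb0 (hm r hr).2.1 hK]
  constructor
  · rintro ⟨hn, hnr⟩
    exact ⟨hnr, (mem_nsmul_iff_of_isApery h0 hb hm hm' hh hr hnr).1 hn⟩
  · rintro ⟨hnr, hn⟩
    exact ⟨(mem_nsmul_iff_of_isApery h0 hb hm hm' hh hr hnr).2 hn, hnr⟩

open LaurentPolynomial in
lemma one_sub_T_mul_sum_filter_mod {A : Finset ℕ} {b h r : ℕ} {m m' : ℕ → ℕ} (h0 : 0 ∈ A)
    (hb : IsGreatest (A : Set ℕ) b) (hm : IsApery (tangentSet A) b m)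
    (hm' : IsApery (tangentSet (A.image (b - ·))) b m') (hh : 2 * b ≤ h + 4) (hr : r < b) :
    (1 - T b : LaurentPolynomial ℤ) * ∑ n ∈ (h • A).filter (· % b = r), T n =
      T (m r) - T (b * (h + 1) - m' ((b - r) % b)) := by
  obtain ⟨K, hK, hKeq⟩ := filter_mod_nsmul_eq_image h0 hb hm hm' hh hr
  rw [hK, Finset.sum_image fun x _ y _ hxy =>
    Nat.eq_of_mul_eq_mul_left (by omega) (Nat.add_left_cancel hxy)]
  push_cast
  rw [one_sub_T_mul_sum_T_add_mul]
  congr 2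
  zify at hKeq
  linear_combination hKeq

theorem brion_formula_dim_one_general (A : Finset ℕ) (h0 : 0 ∈ A)
    (b : ℕ) (hb : IsGreatest (A : Set ℕ) b) (hb1 : 1 ≤ b)
    (m m' : ℕ → ℕ)
    (hm : ∀ r < b, m r ∈ tangentSet A ∧ m r % b = r ∧
      ∀ n ∈ tangentSet A, n % b = r → m r ≤ n)
    (hm' : ∀ r < b, m' r ∈ tangentSet (A.image fun x => b - x) ∧ m' r % b = r ∧
      ∀ n ∈ tangentSet (A.image fun x => b - x), n % b = r → m' r ≤ n) :
    ∀ h : ℕ, (2 * b : ℤ) - 4 ≤ (h : ℤ) →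
      ((1 : LaurentPolynomial ℤ) - LaurentPolynomial.T (b : ℤ)) *
          ∑ n ∈ iterFin A h, LaurentPolynomial.T (n : ℤ)
        = (∑ r ∈ Finset.range b, LaurentPolynomial.T ((m r : ℤ)))
          - ∑ r ∈ Finset.range b,
              LaurentPolynomial.T ((b : ℤ) * ((h : ℤ) + 1) - (m' r : ℤ)) := by
  intro h hh
  rw [iterFin_eq_nsmul,
    ← Finset.sum_fiberwise_of_maps_to fun n _ => Finset.mem_range.2 (Nat.mod_lt n hb1),
    Finset.mul_sum, Finset.sum_congr rfl fun r hr =>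
      one_sub_T_mul_sum_filter_mod h0 hb hm hm' (by omega) (Finset.mem_range.1 hr),
    Finset.sum_sub_distrib,
    Finset.sum_range_sub_mod b fun r => LaurentPolynomial.T ((b : ℤ) * (h + 1) - m' r)]

theorem brion_formula_dim_one (A : Finset ℕ) (h0 : 0 ∈ A) (hgcd : A.gcd id = 1)
    (b : ℕ) (hb : IsGreatest (A : Set ℕ) b) (hb1 : 1 ≤ b)
    (m m' : ℕ → ℕ)
    (hm : ∀ r < b, m r ∈ tangentSet A ∧ m r % b = r ∧
      ∀ n ∈ tangentSet A, n % b = r → m r ≤ n)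
    (hm' : ∀ r < b, m' r ∈ tangentSet (A.image fun x => b - x) ∧ m' r % b = r ∧
      ∀ n ∈ tangentSet (A.image fun x => b - x), n % b = r → m' r ≤ n) :
    ∀ h : ℕ, (2 * b : ℤ) - 4 ≤ (h : ℤ) →
      ((1 : LaurentPolynomial ℤ) - LaurentPolynomial.T (b : ℤ)) *
          ∑ n ∈ iterFin A h, LaurentPolynomial.T (n : ℤ)
        = (∑ r ∈ Finset.range b, LaurentPolynomial.T ((m r : ℤ)))
          - ∑ r ∈ Finset.range b,
              LaurentPolynomial.T ((b : ℤ) * ((h : ℤ) + 1) - (m' r : ℤ)) :=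
  brion_formula_dim_one_general A h0 b hb hb1 m m' hm hm'
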